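/- arXiv:2104.06606 — 5 statements merged into one kernel-verified Lean document; each statement's English description precedes it below -/
import Mathlib

section
/- Let B ∈ ℝ^{n×n} be an irreducible nonsingular M-matrix and β > 0. If (u, λ) is a positive eigenpair of β·diag(u^[2])u + Bu = λu with uᵀu = 1, then the Jacobian matrix J(u, λ) = β·diag(u^[2]) + B − λI + 2β·diag(u^[2]) = 3β·diag(u^[2]) + B − λI is a nonsingular M-matrix; in particular it is invertible. -/
open Matrix Filter Topology

/-- Spectral radius of a real matrix (over its complex spectrum). -/
noncomputable def specRad {n : ℕ} (A : Matrix (Fin n) (Fin n) ℝ) : ℝ :=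
  sSup {r : ℝ | ∃ μ : ℂ, μ ∈ spectrum ℂ (A.map (fun x => (x : ℂ))) ∧ r = ‖μ‖}

/-- Entrywise nonnegative matrix. -/
def MatNonneg {n : ℕ} (A : Matrix (Fin n) (Fin n) ℝ) : Prop := ∀ i j, 0 ≤ A i j

/-- `B` is an M-matrix: `B = s•I - A` with `A ≥ 0` and `s ≥ ρ(A)`. -/
def IsMMat {n : ℕ} (B : Matrix (Fin n) (Fin n) ℝ) : Prop :=
  ∃ s A, MatNonneg A ∧ specRad A ≤ s ∧ B = s • (1 : Matrix (Fin n) (Fin n) ℝ) - A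

/-- `B` is a nonsingular M-matrix: `B = s•I - A` with `A ≥ 0` and `s > ρ(A)`. -/
def IsNsMMat {n : ℕ} (B : Matrix (Fin n) (Fin n) ℝ) : Prop :=
  ∃ s A, MatNonneg A ∧ specRad A < s ∧ B = s • (1 : Matrix (Fin n) (Fin n) ℝ) - A

/-- Irreducibility: no nonempty proper index set `I` with `B i j = 0` for `i ∈ I`, `j ∉ I`. -/
def MatIrred {n : ℕ} (B : Matrix (Fin n) (Fin n) ℝ) : Prop :=
  ¬ ∃ I : Finset (Fin n), I.Nonempty ∧ I ≠ Finset.univ ∧ ∀ i ∈ I, ∀ j ∉ I, B i j = 0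

/-- `A(u) = β·diag(u^[2]) + B`. -/
noncomputable def AU {n : ℕ} (β : ℝ) (B : Matrix (Fin n) (Fin n) ℝ) (u : Fin n → ℝ) :
    Matrix (Fin n) (Fin n) ℝ :=
  β • Matrix.diagonal (fun i => u i ^ 2) + B

/-- Jacobian `J(u,λ) = 3β·diag(u^[2]) + B - λI`. -/
noncomputable def JU {n : ℕ} (β lam : ℝ) (B : Matrix (Fin n) (Fin n) ℝ) (u : Fin n → ℝ) :
    Matrix (Fin n) (Fin n) ℝ :=
  (3 * β) • Matrix.diagonal (fun i => u i ^ 2) + B - lam • (1 : Matrix (Fin n) (Fin n) ℝ)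

/-- Smallest (real) eigenvalue. -/
noncomputable def smallestEig {n : ℕ} (B : Matrix (Fin n) (Fin n) ℝ) : ℝ :=
  sInf {μ : ℝ | ∃ v : Fin n → ℝ, v ≠ 0 ∧ B.mulVec v = μ • v}

/-- Largest (real) eigenvalue. -/
noncomputable def largestEig {n : ℕ} (B : Matrix (Fin n) (Fin n) ℝ) : ℝ :=
  sSup {μ : ℝ | ∃ v : Fin n → ℝ, v ≠ 0 ∧ B.mulVec v = μ • v}

/-- Euclidean norm of a vector. -/
noncomputable def vecNorm {n : ℕ} (u : Fin n → ℝ) : ℝ := Real.sqrt (∑ i, u i ^ 2)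

/-- 1-norm of a vector. -/
noncomputable def vecNorm1 {n : ℕ} (u : Fin n → ℝ) : ℝ := ∑ i, |u i|

/-- Spectral (operator 2-) norm of a matrix. -/
noncomputable def matNorm {n : ℕ} (A : Matrix (Fin n) (Fin n) ℝ) : ℝ :=
  sSup {r : ℝ | ∃ x : Fin n → ℝ, vecNorm x ≤ 1 ∧ r = vecNorm (A.mulVec x)}

/-
`J(u, λ) u = 3β u^[3] + B u − λ u = 2β u^[3]` is a positive vector, and `J` has the nonpositive
off-diagonal entries of `B`. A Z-matrix `J` sending some `u > 0` to a positive vector is a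
nonsingular M-matrix: for large `s`, `A = sI − J` is nonnegative with `A u ≤ (s − δ) u`, and
evaluating an eigenvector equation of `A` at an index maximizing `|v_j| / u_j` shows that every
eigenvalue of `A` has modulus at most `s − δ < s` (Collatz–Wielandt).
-/

lemma exists_pos_mul_le_of_pos {ι : Type*} [Finite ι] {u v : ι → ℝ} (hu : ∀ i, 0 < u i)
    (hv : ∀ i, 0 < v i) :    ∃ δ > 0, ∀ i, δ * u i ≤ v i := by
  cases isEmpty_or_nonempty ι
  · exact ⟨1, one_pos, isEmptyElim⟩
  obtain ⟨i₀, hi₀⟩ := Finite.exists_min fun i => v i / u i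
  exact ⟨v i₀ / u i₀, div_pos (hv i₀) (hu i₀), fun i => (le_div_iff₀ (hu i)).1 (hi₀ i)⟩

section Spectrum

variable {ι : Type*} [Fintype ι] [DecidableEq ι]

lemma exists_mulVec_eq_smul_of_mem_spectrum {M : Matrix ι ι ℂ} {μ : ℂ}
    (hμ : μ ∈ spectrum ℂ M) : ∃ v : ι → ℂ, v ≠ 0 ∧ M *ᵥ v = μ • v := by
  rw [← spectrum_toLin', ← Module.End.hasEigenvalue_iff_mem_spectrum] at hμ
  obtain ⟨v, hv⟩ := hμ.exists_hasEigenvector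
  exact ⟨v, hv.2, by simpa using hv.apply_eq_smul⟩

lemma norm_le_of_mulVec_le {A : Matrix ι ι ℝ} (hA : ∀ i j, 0 ≤ A i j) {u : ι → ℝ}
    (hu : ∀ i, 0 < u i) {c : ℝ} (hc : ∀ i, (A *ᵥ u) i ≤ c * u i) {μ : ℂ}
    (hμ : μ ∈ spectrum ℂ (A.map (fun x : ℝ => (x : ℂ)))) : ‖μ‖ ≤ c := by
  obtain ⟨v, hv, hμv⟩ := exists_mulVec_eq_smul_of_mem_spectrum hμ
  obtain ⟨j₀, hj₀⟩ := Function.ne_iff.mp hv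
  have : Nonempty ι := ⟨j₀⟩
  obtain ⟨i, hi⟩ := Finite.exists_max fun j => ‖v j‖ / u j
  set K := ‖v i‖ / u i
  have hvK : ∀ j, ‖v j‖ ≤ K * u j := fun j => (div_le_iff₀ (hu j)).1 (hi j)
  have hK : 0 < K := (div_pos (norm_pos_iff.2 hj₀) (hu j₀)).trans_le (hi j₀)
  have hrow : μ * v i = ∑ j, (A i j : ℂ) * v j := by
    simpa [mulVec, dotProduct] using (congrFun hμv i).symm
  have hvi : ‖v i‖ = K * u i := (div_mul_cancel₀ _ (hu i).ne').symm
  have : ‖μ‖ * (K * u i) ≤ c * (K * u i) :=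
    calc ‖μ‖ * (K * u i) = ‖∑ j, (A i j : ℂ) * v j‖ := by rw [← hvi, ← norm_mul, hrow]
      _ ≤ ∑ j, A i j * ‖v j‖ := by
          refine (norm_sum_le _ _).trans_eq (Finset.sum_congr rfl fun j _ => ?_)
          rw [norm_mul, Complex.norm_real, Real.norm_of_nonneg (hA i j)]
      _ ≤ ∑ j, A i j * (K * u j) :=
          Finset.sum_le_sum fun j _ => mul_le_mul_of_nonneg_left (hvK j) (hA i j)
      _ = K * (A *ᵥ u) i := by
          simp only [mulVec, dotProduct, Finset.mul_sum]
          exact Finset.sum_congr rfl fun j _ => by ring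
      _ ≤ K * (c * u i) := mul_le_mul_of_nonneg_left (hc i) hK.le
      _ = c * (K * u i) := by ring
  exact le_of_mul_le_mul_right this (mul_pos hK (hu i))

end Spectrum

section MMatrix

variable {n : ℕ}

lemma le_specRad {A : Matrix (Fin n) (Fin n) ℝ} {μ : ℂ}
    (hμ : μ ∈ spectrum ℂ (A.map (fun x => (x : ℂ)))) : ‖μ‖ ≤ specRad A := by
  have hfin := (finite_spectrum (A.map fun x : ℝ => (x : ℂ))).image fun ν : ℂ => ‖ν‖
  refine le_csSup (hfin.bddAbove.mono ?_) ⟨μ, hμ, rfl⟩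
  rintro _ ⟨ν, hν, rfl⟩
  exact ⟨ν, hν, rfl⟩

lemma specRad_le {A : Matrix (Fin n) (Fin n) ℝ} {c : ℝ} (hc : 0 ≤ c)
    (h : ∀ μ ∈ spectrum ℂ (A.map (fun x => (x : ℂ))), ‖μ‖ ≤ c) : specRad A ≤ c :=
  Real.sSup_le (by rintro _ ⟨μ, hμ, rfl⟩; exact h μ hμ) hc

lemma IsNsMMat.pairwise_nonpos {M : Matrix (Fin n) (Fin n) ℝ} (hM : IsNsMMat M) :
    Pairwise fun i j => M i j ≤ 0 := by
  obtain ⟨s, A, hA, -, rfl⟩ := hM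
  intro i j hij
  simpa [one_apply_ne hij] using hA i j

lemma IsNsMMat.isUnit {M : Matrix (Fin n) (Fin n) ℝ} (hM : IsNsMMat M) : IsUnit M := by
  obtain ⟨s, A, -, hsA, rfl⟩ := hM
  by_contra hsing
  have hmap : algebraMap ℂ _ (s : ℂ) - A.map (fun x => (x : ℂ)) =
      Complex.ofRealHom.mapMatrix (s • 1 - A) := by
    ext i j
    by_cases hij : i = j <;> simp [algebraMap_matrix_apply, one_apply, hij]
  have hs : (s : ℂ) ∈ spectrum ℂ (A.map (fun x => (x : ℂ))) := by
    rw [spectrum.mem_iff, hmap, isUnit_iff_isUnit_det, ← RingHom.map_det, isUnit_map_iff,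
      ← isUnit_iff_isUnit_det]
    exact hsing
  have := le_specRad hs
  rw [Complex.norm_real, Real.norm_eq_abs] at this
  linarith [le_abs_self s]

lemma isNsMMat_of_mulVec_pos {M : Matrix (Fin n) (Fin n) ℝ} (hZ : Pairwise fun i j => M i j ≤ 0)
    {u : Fin n → ℝ} (hu : ∀ i, 0 < u i) (hMu : ∀ i, 0 < (M *ᵥ u) i) : IsNsMMat M := by
  obtain ⟨δ, hδ, hδu⟩ := exists_pos_mul_le_of_pos hu hMu
  set s := 1 + ∑ i, |M i i|
  have hdiag : ∀ i, M i i ≤ s := fun i =>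
    (le_abs_self _).trans <| (Finset.single_le_sum (fun j _ => abs_nonneg (M j j))
      (Finset.mem_univ i)).trans (le_add_of_nonneg_left zero_le_one)
  have hA : MatNonneg (s • 1 - M) := by
    intro i j
    rcases eq_or_ne i j with rfl | hij
    · simpa using hdiag i
    · simpa [one_apply_ne hij] using hZ hij
  have hAu : ∀ i, ((s • 1 - M) *ᵥ u) i ≤ max (s - δ) 0 * u i := fun i => by
    have : ((s • 1 - M) *ᵥ u) i = s * u i - (M *ᵥ u) i := by
      simp [sub_mulVec, smul_mulVec]
    rw [this]
    nlinarith [hδu i, le_max_left (s - δ) 0, hu i]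
  have hs : 0 < s := by positivity
  refine ⟨s, s • 1 - M, hA, ?_, by abel⟩
  refine (specRad_le (le_max_right _ _) fun μ hμ => norm_le_of_mulVec_le hA hu hAu hμ).trans_lt ?_
  exact max_lt (by linarith) hs

end MMatrix

lemma JU_mulVec_self {n : ℕ} {B : Matrix (Fin n) (Fin n) ℝ} {β lam : ℝ} {u : Fin n → ℝ}
    (heig : (AU β B u) *ᵥ u = lam • u) : JU β lam B u *ᵥ u = fun i => 2 * β * u i ^ 3 := by
  ext i
  have hi := congrFun heig i
  simp only [AU, JU, sub_mulVec, add_mulVec, smul_mulVec, mulVec_diagonal, one_mulVec,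
    Pi.sub_apply, Pi.add_apply, Pi.smul_apply, smul_eq_mul] at hi ⊢
  linear_combination hi

theorem stmt2_general {n : ℕ} (B : Matrix (Fin n) (Fin n) ℝ) (β lam : ℝ)
    (u : Fin n → ℝ) (hB2 : IsNsMMat B) (hβ : 0 < β)
    (hu : ∀ i, 0 < u i)
    (heig : (AU β B u).mulVec u = lam • u) :
    IsNsMMat (JU β lam B u) ∧ IsUnit (JU β lam B u) := by
  have hZ : Pairwise fun i j => JU β lam B u i j ≤ 0 := fun i j hij => by
    simpa [JU, one_apply_ne hij, diagonal_apply_ne _ hij] using hB2.pairwise_nonpos hij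
  have hJu : ∀ i, 0 < (JU β lam B u *ᵥ u) i := fun i => by
    rw [JU_mulVec_self heig]
    have := hu i
    positivity
  have hJ := isNsMMat_of_mulVec_pos hZ hu hJu
  exact ⟨hJ, hJ.isUnit⟩

theorem stmt2 {n : ℕ} [NeZero n] (B : Matrix (Fin n) (Fin n) ℝ) (β lam : ℝ)
    (u : Fin n → ℝ) (hB1 : MatIrred B) (hB2 : IsNsMMat B) (hβ : 0 < β)
    (hu : ∀ i, 0 < u i) (hnorm : ∑ i, u i ^ 2 = 1)
    (heig : (AU β B u).mulVec u = lam • u) :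
    IsNsMMat (JU β lam B u) ∧ IsUnit (JU β lam B u) :=
  stmt2_general B β lam u hB2 hβ hu heig
end

section
/- Let B ∈ ℝ^{n×n} be a symmetric irreducible nonsingular M-matrix, β > 0, and λ > λ_min(B). Then the equation β·diag(u^[2])u + Bu = λu has a unique positive solution u(λ) > 0 (with no normalization constraint). -/
open Matrix Filter Topology

/-!
Solutions of `β u³ + (B - λ) u = 0` are the critical points of the energy
`E(u) = ½ uᵀ(B - λ)u + ¼ β ∑ uᵢ⁴`. Since `λ` exceeds the smallest eigenvalue, `E` is negative
along a short eigenvector, and it is coercive, so it has a nonzero global minimiser `m`. As the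
off-diagonal entries of `B` are nonpositive, `E(|m|) ≤ E(m)`, so `|m|` is a nonnegative
nonzero solution, and irreducibility makes it positive. Uniqueness: if `u > 0` and `v` are
solutions and `t = maxᵢ vᵢ / uᵢ > 1`, then at a maximising index the equations for `v` and `t u`
contradict each other, because `t³ > t`.
-/

open Finset

section Energy

variable {ι : Type*} [Fintype ι] (C : Matrix ι ι ℝ)

noncomputable def energy (β : ℝ) (u : ι → ℝ) : ℝ :=
  u ⬝ᵥ C *ᵥ u / 2 + β / 4 * ∑ i, u i ^ 4

lemma continuous_energy (β : ℝ) : Continuous (energy C β) := by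
  unfold energy
  fun_prop

lemma energy_smul (β c : ℝ) (w : ι → ℝ) :
    energy C β (c • w) = c ^ 2 * (w ⬝ᵥ C *ᵥ w / 2 + β / 4 * c ^ 2 * ∑ i, w i ^ 4) := by
  simp only [energy, mulVec_smul, dotProduct_smul, smul_dotProduct, smul_eq_mul, Pi.smul_apply,
    mul_pow, ← mul_sum]
  ring

lemma exists_energy_neg {β : ℝ} (hβ : 0 ≤ β) {w : ι → ℝ} (hw : w ⬝ᵥ C *ᵥ w < 0) :
    ∃ u, energy C β u < 0 := by
  set q := w ⬝ᵥ C *ᵥ w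
  set S := β * ∑ i, w i ^ 4
  have hS : 0 ≤ S := by positivity
  -- with `c ^ 2 = s`, the quartic term is at most `-q / 4`, half the size of the quadratic one
  set s := -q / (S + 1)
  have hs : 0 < s := div_pos (neg_pos.2 hw) (by positivity)
  have hquartic : S * s ≤ -q := by
    rw [mul_div_assoc', div_le_iff₀ (by positivity)]
    nlinarith
  refine ⟨Real.sqrt s • w, ?_⟩
  rw [energy_smul, Real.sq_sqrt hs.le]
  have : q / 2 + β / 4 * s * ∑ i, w i ^ 4 < 0 := by nlinarith
  exact mul_neg_of_pos_of_neg hs this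

lemma abs_dotProduct_mulVec_le (u : ι → ℝ) :
    |u ⬝ᵥ C *ᵥ u| ≤ (∑ i, ∑ j, |C i j|) * ‖u‖ ^ 2 := by
  have hu : ∀ i, |u i| ≤ ‖u‖ := fun i => by simpa using norm_le_pi_norm u i
  calc |u ⬝ᵥ C *ᵥ u| = |∑ i, ∑ j, u i * (C i j * u j)| := by
        simp only [dotProduct, mulVec, mul_sum]
    _ ≤ ∑ i, ∑ j, |u i * (C i j * u j)| :=
        (abs_sum_le_sum_abs _ _).trans (sum_le_sum fun i _ => abs_sum_le_sum_abs _ _)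
    _ ≤ ∑ i, ∑ j, |C i j| * ‖u‖ ^ 2 := by
        refine sum_le_sum fun i _ => sum_le_sum fun j _ => ?_
        have huu : |u i| * |u j| ≤ ‖u‖ ^ 2 := by
          rw [sq]; exact mul_le_mul (hu i) (hu j) (abs_nonneg _) (norm_nonneg u)
        rw [abs_mul, abs_mul, mul_left_comm]
        exact mul_le_mul_of_nonneg_left huu (abs_nonneg _)
    _ = (∑ i, ∑ j, |C i j|) * ‖u‖ ^ 2 := by simp only [sum_mul]

lemma norm_pow_four_le_sum [Nonempty ι] (u : ι → ℝ) : ‖u‖ ^ 4 ≤ ∑ i, u i ^ 4 := by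
  obtain ⟨i, hi⟩ := Finite.exists_max fun j => |u j|
  have hnorm : ‖u‖ ≤ |u i| :=
    (pi_norm_le_iff_of_nonneg (abs_nonneg _)).2 fun j => by simpa using hi j
  calc ‖u‖ ^ 4 ≤ |u i| ^ 4 := pow_le_pow_left₀ (norm_nonneg u) hnorm 4
    _ = u i ^ 4 := by rw [show 4 = 2 * 2 from rfl, pow_mul, sq_abs, ← pow_mul]
    _ ≤ ∑ j, u j ^ 4 :=
      single_le_sum (f := fun j => u j ^ 4) (fun j _ => by positivity) (mem_univ i)

lemma tendsto_energy_cocompact [Nonempty ι] {β : ℝ} (hβ : 0 < β) :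
    Tendsto (energy C β) (cocompact (ι → ℝ)) atTop := by
  set K := ∑ i, ∑ j, |C i j|
  have hlower : ∀ u, ‖u‖ ^ 2 * (β / 4 * ‖u‖ ^ 2 - K / 2) ≤ energy C β u := fun u => by
    have h4 := mul_le_mul_of_nonneg_left (norm_pow_four_le_sum u) (by positivity : 0 ≤ β / 4)
    have h2 := neg_abs_le (u ⬝ᵥ C *ᵥ u)
    have := abs_dotProduct_mulVec_le C u
    unfold energy
    nlinarith
  have hquartic : Tendsto (fun r : ℝ => r ^ 2 * (β / 4 * r ^ 2 - K / 2)) atTop atTop :=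
    (tendsto_pow_atTop two_ne_zero).atTop_mul_atTop₀ <| tendsto_atTop_add_const_right _ _ <|
      (tendsto_pow_atTop two_ne_zero).const_mul_atTop (by positivity)
  exact tendsto_atTop_mono hlower (hquartic.comp tendsto_norm_cocompact_atTop)

variable {C} in
lemma hasDerivAt_energy_add_smul (hC : C.IsSymm) (β : ℝ) (u v : ι → ℝ) :
    HasDerivAt (fun t : ℝ => energy C β (u + t • v)) (v ⬝ᵥ (β • u ^ 3 + C *ᵥ u)) 0 := by
  have hsymm : u ⬝ᵥ C *ᵥ v = v ⬝ᵥ C *ᵥ u := by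
    rw [dotProduct_mulVec, ← mulVec_transpose, hC.eq, dotProduct_comm]
  have hquad : (fun t : ℝ => (u + t • v) ⬝ᵥ C *ᵥ (u + t • v)) =
      fun t => u ⬝ᵥ C *ᵥ u + t * (2 * v ⬝ᵥ C *ᵥ u) + t ^ 2 * (v ⬝ᵥ C *ᵥ v) := by
    ext t
    simp only [mulVec_add, mulVec_smul, dotProduct_add, add_dotProduct, dotProduct_smul,
      smul_dotProduct, smul_eq_mul, hsymm]
    ring
  have hquad' : HasDerivAt (fun t : ℝ => (u + t • v) ⬝ᵥ C *ᵥ (u + t • v))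
      (2 * v ⬝ᵥ C *ᵥ u) 0 := by
    rw [hquad]
    simpa using (((hasDerivAt_id (0 : ℝ)).mul_const (2 * v ⬝ᵥ C *ᵥ u)).const_add
      (u ⬝ᵥ C *ᵥ u)).fun_add ((hasDerivAt_pow 2 (0 : ℝ)).mul_const (v ⬝ᵥ C *ᵥ v))
  have hquartic : HasDerivAt (fun t : ℝ => ∑ i, (u + t • v) i ^ 4)
      (∑ i, 4 * u i ^ 3 * v i) 0 := by
    refine HasDerivAt.fun_sum fun i _ => ?_
    simpa using (((hasDerivAt_id (0 : ℝ)).mul_const (v i)).const_add (u i)).fun_pow 4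
  refine ((hquad'.div_const 2).fun_add (hquartic.const_mul (β / 4))).congr_deriv ?_
  have hcubic : β * (v ⬝ᵥ u ^ 3) = β / 4 * ∑ i, 4 * u i ^ 3 * v i := by
    simp only [dotProduct, Pi.pow_apply, mul_sum]
    exact sum_congr rfl fun i _ => by ring
  rw [dotProduct_add, dotProduct_smul, smul_eq_mul, hcubic]
  ring

variable {C} in
lemma IsLocalMin.smul_pow_three_add_mulVec_eq_zero (hC : C.IsSymm) {β : ℝ} {u : ι → ℝ}
    (h : IsLocalMin (energy C β) u) : β • u ^ 3 + C *ᵥ u = 0 := by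
  set g := β • u ^ 3 + C *ᵥ u
  have hline : IsLocalMin (fun t : ℝ => energy C β (u + t • g)) 0 := by
    have h0 : IsLocalMin (energy C β) (u + (0 : ℝ) • g) := by simpa using h
    exact h0.comp_continuous (g := fun t : ℝ => u + t • g) (b := 0)
      (by fun_prop : Continuous fun t : ℝ => u + t • g).continuousAt
  exact dotProduct_self_eq_zero.1 (hline.hasDerivAt_eq_zero (hasDerivAt_energy_add_smul hC β u g))

end Energy

def IsZMatrix {ι : Type*} (C : Matrix ι ι ℝ) : Prop := ∀ i j, i ≠ j → C i j ≤ 0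

namespace IsZMatrix

variable {ι : Type*} {C : Matrix ι ι ℝ}

lemma sub_smul_one [DecidableEq ι] (hC : IsZMatrix C) (c : ℝ) : IsZMatrix (C - c • 1) :=
  fun i j hij => by simpa [one_apply_ne hij] using hC i j hij

lemma mul_nonpos_of_apply_eq_zero (hC : IsZMatrix C) {x : ι → ℝ} (hx : 0 ≤ x) {i : ι}
    (hi : x i = 0) (j : ι) : C i j * x j ≤ 0 := by
  rcases eq_or_ne i j with rfl | hij
  · simp [hi]
  · exact mul_nonpos_of_nonpos_of_nonneg (hC i j hij) (hx j)

variable [Fintype ι]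

lemma mulVec_apply_nonpos (hC : IsZMatrix C) {x : ι → ℝ} (hx : 0 ≤ x) {i : ι} (hi : x i = 0) :
    (C *ᵥ x) i ≤ 0 :=
  sum_nonpos fun j _ => hC.mul_nonpos_of_apply_eq_zero hx hi j

lemma energy_abs_le (hC : IsZMatrix C) (β : ℝ) (u : ι → ℝ) :
    energy C β |u| ≤ energy C β u := by
  have hquad : |u| ⬝ᵥ C *ᵥ |u| ≤ u ⬝ᵥ C *ᵥ u := by
    simp only [dotProduct, mulVec, mul_sum]
    refine sum_le_sum fun i _ => sum_le_sum fun j _ => ?_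
    simp only [Pi.abs_apply]
    rcases eq_or_ne i j with rfl | hij
    · rw [mul_left_comm, abs_mul_abs_self, mul_left_comm]
    · have := mul_le_mul_of_nonpos_left (le_abs_self (u i * u j)) (hC i j hij)
      rw [abs_mul] at this
      linarith
  have hquartic : ∑ i, |u| i ^ 4 = ∑ i, u i ^ 4 := by
    simp only [Pi.abs_apply, (by decide : Even 4).pow_abs]
  unfold energy
  rw [hquartic]
  linarith

lemma le_of_smul_pow_three_add_mulVec_eq_zero (hC : IsZMatrix C) {β : ℝ} (hβ : 0 < β)
    {u v : ι → ℝ} (hu : ∀ i, 0 < u i) (hu_eq : β • u ^ 3 + C *ᵥ u = 0)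
    (hv_eq : β • v ^ 3 + C *ᵥ v = 0) : v ≤ u := by
  by_contra hvu
  obtain ⟨i₀, hi₀⟩ : ∃ i, u i < v i := by simpa [Pi.le_def] using hvu
  have : Nonempty ι := ⟨i₀⟩
  -- compare `v` with the smallest multiple `t • u` lying above it
  obtain ⟨i, hi⟩ := Finite.exists_max fun j => v j / u j
  set t := v i / u i
  have ht : 1 < t := ((one_lt_div (hu i₀)).2 hi₀).trans_le (hi i₀)
  have hx : 0 ≤ t • u - v := fun j => by
    have := (div_le_iff₀ (hu j)).1 (hi j)
    simp only [Pi.zero_apply, Pi.sub_apply, Pi.smul_apply, smul_eq_mul]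
    linarith
  have hvi : v i = t * u i := (div_mul_cancel₀ _ (hu i).ne').symm
  have hxi : (t • u - v) i = 0 := by simp [hvi]
  have hCx := hC.mulVec_apply_nonpos hx hxi
  have hui := congrFun hu_eq i
  have hvi' := congrFun hv_eq i
  simp only [mulVec_sub, mulVec_smul, Pi.sub_apply, Pi.smul_apply, Pi.add_apply, Pi.pow_apply,
    smul_eq_mul, Pi.zero_apply] at hCx hui hvi'
  -- `(C *ᵥ (t • u - v)) i = β * u i ^ 3 * (t ^ 3 - t)`, which is positive
  have hpos : 0 < β * u i ^ 3 * (t * ((t - 1) * (t + 1))) := by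
    have := hu i
    have : 0 < t - 1 := by linarith
    positivity
  rw [hvi] at hvi'
  nlinarith

end IsZMatrix

lemma IsNsMMat.isZMatrix {n : ℕ} {B : Matrix (Fin n) (Fin n) ℝ} (hB : IsNsMMat B) :
    IsZMatrix B := by
  obtain ⟨s, A, hA, -, rfl⟩ := hB
  intro i j hij
  simpa [one_apply_ne hij] using hA i j

lemma MatIrred.sub_smul_one {n : ℕ} {B : Matrix (Fin n) (Fin n) ℝ} (hB : MatIrred B) (c : ℝ) :
    MatIrred (B - c • 1) := by
  rintro ⟨I, hI, hIu, hzero⟩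
  refine hB ⟨I, hI, hIu, fun i hi j hj => ?_⟩
  have hij : i ≠ j := by rintro rfl; exact hj hi
  simpa [one_apply_ne hij] using hzero i hi j hj

lemma MatIrred.pos_of_nonneg {n : ℕ} {C : Matrix (Fin n) (Fin n) ℝ} (hirr : MatIrred C)
    (hC : IsZMatrix C) {u : Fin n → ℝ} (hu0 : 0 ≤ u) (hu : u ≠ 0)
    (h : ∀ i, u i = 0 → (C *ᵥ u) i = 0) : ∀ i, 0 < u i := by
  by_contra hneg
  obtain ⟨i₀, hi₀⟩ : ∃ i, u i ≤ 0 := by simpa using hneg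
  refine hirr ⟨univ.filter (u · = 0), ⟨i₀, by simpa using le_antisymm hi₀ (hu0 i₀)⟩, ?_, ?_⟩
  · rw [Ne, filter_eq_self]
    exact fun hall => hu (funext fun k => hall k (mem_univ k))
  · intro i hi j hj
    simp only [mem_filter, mem_univ, true_and] at hi hj
    have hterm :=
      (sum_eq_zero_iff_of_nonpos fun k _ => hC.mul_nonpos_of_apply_eq_zero hu0 hi k).1
        (by simpa [mulVec, dotProduct] using h i hi) j (mem_univ j)
    exact (mul_eq_zero.1 hterm).resolve_right hj

theorem exists_pos_smul_pow_three_add_mulVec_eq_zero {n : ℕ} {C : Matrix (Fin n) (Fin n) ℝ}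
    (hCs : C.IsSymm) (hC : IsZMatrix C) (hirr : MatIrred C) {β : ℝ} (hβ : 0 < β)
    {w : Fin n → ℝ} (hw : w ⬝ᵥ C *ᵥ w < 0) :
    ∃ u : Fin n → ℝ, (∀ i, 0 < u i) ∧ β • u ^ 3 + C *ᵥ u = 0 := by
  have : Nonempty (Fin n) := by
    rcases isEmpty_or_nonempty (Fin n) with h | h
    · simp [Subsingleton.elim w 0] at hw
    · exact h
  obtain ⟨m, hm⟩ := (continuous_energy C β).exists_forall_le (tendsto_energy_cocompact C hβ)
  have hmin : ∀ y, energy C β |m| ≤ energy C β y := fun y => (hC.energy_abs_le β m).trans (hm y)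
  have hcrit : β • |m| ^ 3 + C *ᵥ |m| = 0 :=
    ((isMinOn_univ_iff.2 hmin).isLocalMin univ_mem).smul_pow_three_add_mulVec_eq_zero hCs
  obtain ⟨w', hw'⟩ := exists_energy_neg C hβ.le hw
  have hne : |m| ≠ 0 := fun h0 => by
    have h := hmin w'
    rw [h0, show energy C β 0 = 0 by simp [energy]] at h
    linarith
  refine ⟨|m|, hirr.pos_of_nonneg hC (abs_nonneg m) hne fun i hi => ?_, hcrit⟩
  simpa [hi] using congrFun hcrit i

lemma AU_mulVec_self_eq_smul_iff {n : ℕ} (β lam : ℝ) (B : Matrix (Fin n) (Fin n) ℝ)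
    (u : Fin n → ℝ) :
    (AU β B u) *ᵥ u = lam • u ↔ β • u ^ 3 + (B - lam • 1) *ᵥ u = 0 := by
  have hdiag : diagonal (fun i => u i ^ 2) *ᵥ u = u ^ 3 := by
    ext i
    simp [mulVec_diagonal, pow_succ]
  rw [AU, add_mulVec, smul_mulVec, hdiag, sub_mulVec, smul_mulVec, one_mulVec, ← add_sub_assoc,
    sub_eq_zero]

lemma exists_eigenpair_lt_of_smallestEig_lt {n : ℕ} [NeZero n] {B : Matrix (Fin n) (Fin n) ℝ}
    (hB : B.IsSymm) {lam : ℝ} (h : smallestEig B < lam) :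
    ∃ μ < lam, ∃ w ≠ 0, B *ᵥ w = μ • w := by
  have hherm : B.IsHermitian := isHermitian_iff_isSymm.2 hB
  have hne : {μ : ℝ | ∃ v : Fin n → ℝ, v ≠ 0 ∧ B *ᵥ v = μ • v}.Nonempty := by
    refine ⟨hherm.eigenvalues 0, ⇑(hherm.eigenvectorBasis 0), fun h0 => ?_,
      hherm.mulVec_eigenvectorBasis 0⟩
    exact hherm.eigenvectorBasis.orthonormal.ne_zero 0 (by simpa using h0)
  have hbdd : BddBelow {μ : ℝ | ∃ v : Fin n → ℝ, v ≠ 0 ∧ B *ᵥ v = μ • v} :=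
    ((Module.End.finite_hasEigenvalue (toLin' B)).subset <| by
      rintro μ ⟨v, hv0, hv⟩
      exact Module.End.hasEigenvalue_of_hasEigenvector
        ⟨Module.End.mem_eigenspace_iff.2 (by simpa using hv), hv0⟩).bddBelow
  obtain ⟨μ, ⟨w, hw0, hw⟩, hμ⟩ := (csInf_lt_iff hbdd hne).1 h
  exact ⟨μ, hμ, w, hw0, hw⟩

lemma exists_dotProduct_sub_smul_one_mulVec_neg {n : ℕ} [NeZero n]
    {B : Matrix (Fin n) (Fin n) ℝ} (hB : B.IsSymm) {lam : ℝ} (h : smallestEig B < lam) :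
    ∃ w, w ⬝ᵥ (B - lam • 1) *ᵥ w < 0 := by
  obtain ⟨μ, hμ, w, hw0, hw⟩ := exists_eigenpair_lt_of_smallestEig_lt hB h
  refine ⟨w, ?_⟩
  rw [sub_mulVec, hw, smul_mulVec, one_mulVec, ← sub_smul, dotProduct_smul, smul_eq_mul]
  have hww : 0 < w ⬝ᵥ w :=
    (Fintype.sum_nonneg fun i => mul_self_nonneg (w i)).lt_of_ne'
      (dotProduct_self_eq_zero.not.2 hw0)
  exact mul_neg_of_neg_of_pos (sub_neg.2 hμ) hww

theorem stmt3 {n : ℕ} [NeZero n] (B : Matrix (Fin n) (Fin n) ℝ) (β lam : ℝ)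
    (hB1 : B.IsSymm) (hB2 : MatIrred B) (hB3 : IsNsMMat B) (hβ : 0 < β)
    (hlam : smallestEig B < lam) :
    ∃! u : Fin n → ℝ, (∀ i, 0 < u i) ∧ (AU β B u).mulVec u = lam • u := by
  have hZ := hB3.isZMatrix.sub_smul_one lam
  simp only [AU_mulVec_self_eq_smul_iff]
  obtain ⟨w, hw⟩ := exists_dotProduct_sub_smul_one_mulVec_neg hB1 hlam
  obtain ⟨u, hu, hu_eq⟩ := exists_pos_smul_pow_three_add_mulVec_eq_zero
    (hB1.sub (isSymm_one.smul lam)) hZ (hB2.sub_smul_one lam) hβ hw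
  refine ⟨u, ⟨hu, hu_eq⟩, fun v ⟨hv, hv_eq⟩ => le_antisymm ?_ ?_⟩
  · exact hZ.le_of_smul_pow_three_add_mulVec_eq_zero hβ hu hu_eq hv_eq
  · exact hZ.le_of_smul_pow_three_add_mulVec_eq_zero hβ hv hv_eq hu_eq
end

section
/- Let B ∈ ℝ^{n×n} be a symmetric irreducible nonsingular M-matrix, β > 0, and let μ = λ_min(B). For λ ∈ (μ, ∞), let u(λ) denote the unique positive solution of β·diag(u^[2])u + Bu = λu. Then the map λ ↦ u(λ) is strictly monotone: if μ < λ₁ < λ₂ then u(λ₁) < u(λ₂) componentwise. -/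
open Matrix Filter Topology

/-!
Let `t` be the largest ratio `u(λ₁)ᵢ / u(λ₂)ᵢ`, attained at `i₀`. Since the off-diagonal entries
of `B` are nonpositive, `u(λ₁) ≤ t • u(λ₂)` with equality at `i₀` gives
`(B u(λ₁))ᵢ₀ ≥ t (B u(λ₂))ᵢ₀`. Subtracting `t` times the `i₀`-th equation for `u(λ₂)` from the one
for `u(λ₁)` leaves `β t (t² - 1) u(λ₂)ᵢ₀³ ≤ (λ₁ - λ₂) t u(λ₂)ᵢ₀ < 0`, so `t < 1`.
-/

lemma IsMMat.apply_nonpos_of_ne {n : ℕ} {B : Matrix (Fin n) (Fin n) ℝ} (hB : IsMMat B)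
    {i j : Fin n} (hij : i ≠ j) : B i j ≤ 0 := by
  obtain ⟨s, A, hA, -, rfl⟩ := hB
  simpa [one_apply_ne hij] using hA i j

lemma IsNsMMat.isMMat {n : ℕ} {B : Matrix (Fin n) (Fin n) ℝ} (hB : IsNsMMat B) : IsMMat B := by
  obtain ⟨s, A, hA, hρ, hBeq⟩ := hB
  exact ⟨s, A, hA, hρ.le, hBeq⟩

lemma AU_mulVec_self_apply {n : ℕ} (β : ℝ) (B : Matrix (Fin n) (Fin n) ℝ) (v : Fin n → ℝ)
    (i : Fin n) : (AU β B v *ᵥ v) i = β * v i ^ 3 + (B *ᵥ v) i := by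
  simp only [AU, add_mulVec, smul_mulVec, mulVec_diagonal, Pi.add_apply, Pi.smul_apply,
    smul_eq_mul]
  ring

lemma mulVec_apply_le_of_le_smul_of_apply_eq {n : ℕ} {B : Matrix (Fin n) (Fin n) ℝ}
    (hB : ∀ i j, i ≠ j → B i j ≤ 0) {u v : Fin n → ℝ} {t : ℝ} (hle : u ≤ t • v) {i : Fin n}
    (heq : u i = t * v i) : t * (B *ᵥ v) i ≤ (B *ᵥ u) i := by
  have hdiff : 0 ≤ (B *ᵥ (u - t • v)) i := by
    simp only [mulVec, dotProduct]
    refine Finset.sum_nonneg fun j _ => ?_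
    rcases eq_or_ne i j with rfl | hij
    · simp [heq]
    · exact mul_nonneg_of_nonpos_of_nonpos (hB i j hij) (sub_nonpos.2 (hle j))
  simpa [mulVec_sub, mulVec_smul] using hdiff

theorem AU_eigenvector_lt_of_lt {n : ℕ} {B : Matrix (Fin n) (Fin n) ℝ}
    (hB : ∀ i j, i ≠ j → B i j ≤ 0) {β : ℝ} (hβ : 0 < β) {u v : Fin n → ℝ} {lam₁ lam₂ : ℝ}
    (hu : ∀ i, 0 < u i) (hv : ∀ i, 0 < v i)
    (hueq : AU β B u *ᵥ u = lam₁ • u) (hveq : AU β B v *ᵥ v = lam₂ • v) (hlam : lam₁ < lam₂)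
    (i : Fin n) : u i < v i := by
  have : Nonempty (Fin n) := ⟨i⟩
  obtain ⟨i₀, hmax⟩ := Finite.exists_max fun j => u j / v j
  set t := u i₀ / v i₀
  have ht : 0 < t := div_pos (hu i₀) (hv i₀)
  have hle : u ≤ t • v := fun j => by
    simpa only [Pi.smul_apply, smul_eq_mul, div_le_iff₀ (hv j)] using hmax j
  have heq : u i₀ = t * v i₀ := (div_mul_cancel₀ _ (hv i₀).ne').symm
  have hBuv := mulVec_apply_le_of_le_smul_of_apply_eq hB hle heq
  have E₁ := congrFun hueq i₀
  have E₂ := congrFun hveq i₀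
  simp only [AU_mulVec_self_apply, Pi.smul_apply, smul_eq_mul, heq] at E₁ E₂
  have key : β * t * v i₀ ^ 3 * (t ^ 2 - 1) ≤ (lam₁ - lam₂) * t * v i₀ := by
    linear_combination E₁ - t * E₂ + hBuv
  have hneg : (lam₁ - lam₂) * t * v i₀ < 0 :=
    mul_neg_of_neg_of_pos (mul_neg_of_neg_of_pos (by linarith) ht) (hv i₀)
  have ht_sq : t ^ 2 < 1 := by
    have hpos : 0 < β * t * v i₀ ^ 3 := by have := hv i₀; positivity
    nlinarith
  calc u i ≤ t * v i := hle i
    _ < 1 * v i := mul_lt_mul_of_pos_right ((sq_lt_one_iff₀ ht.le).1 ht_sq) (hv i)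
    _ = v i := one_mul _

theorem stmt4_general {n : ℕ} (B : Matrix (Fin n) (Fin n) ℝ) (β : ℝ)
    (hB3 : IsNsMMat B) (hβ : 0 < β)
    (u : ℝ → Fin n → ℝ)
    (hsol : ∀ lam, smallestEig B < lam →
      (∀ i, 0 < u lam i) ∧ (AU β B (u lam)).mulVec (u lam) = lam • u lam) :
    ∀ lam₁ lam₂ : ℝ, smallestEig B < lam₁ → lam₁ < lam₂ →
      ∀ i, u lam₁ i < u lam₂ i := by
  intro lam₁ lam₂ h₁ h₁₂
  obtain ⟨hu₁, hu₁eq⟩ := hsol lam₁ h₁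
  obtain ⟨hu₂, hu₂eq⟩ := hsol lam₂ (h₁.trans h₁₂)
  exact AU_eigenvector_lt_of_lt (fun _ _ => hB3.isMMat.apply_nonpos_of_ne) hβ hu₁ hu₂
    hu₁eq hu₂eq h₁₂

theorem stmt4 {n : ℕ} [NeZero n] (B : Matrix (Fin n) (Fin n) ℝ) (β : ℝ)
    (hB1 : B.IsSymm) (hB2 : MatIrred B) (hB3 : IsNsMMat B) (hβ : 0 < β)
    (u : ℝ → Fin n → ℝ)
    (hsol : ∀ lam, smallestEig B < lam →
      (∀ i, 0 < u lam i) ∧ (AU β B (u lam)).mulVec (u lam) = lam • u lam)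
    (huniq : ∀ lam, smallestEig B < lam → ∀ v : Fin n → ℝ,
      (∀ i, 0 < v i) → (AU β B v).mulVec v = lam • v → v = u lam) :
    ∀ lam₁ lam₂ : ℝ, smallestEig B < lam₁ → lam₁ < lam₂ →
      ∀ i, u lam₁ i < u lam₂ i :=
  stmt4_general B β hB3 hβ u hsol
end

section
/- Let B ∈ ℝ^{n×n} be a symmetric irreducible nonsingular M-matrix, β > 0, μ = λ_min(B), and let u(λ) be the unique positive solution of β·diag(u^[2])u + Bu = λu for λ > μ. Then u(λ) is a continuous (indeed differentiable) function of λ on (μ, ∞), with derivative ∂u(λ)/∂λ = J(u(λ), λ)^{-1} u(λ), where J(u, λ) = 3β·diag(u^[2]) + B − λI. -/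
/-!
At a positive solution `u` of `A(u) u = λ u`, the matrix `A(u) = β diag(u²) + B` is a symmetric
matrix with nonpositive off-diagonal entries and the positive eigenvector `u`, so `λ` is the bottom
of its spectrum: writing `x = u ∘ y` turns `xᵀ (A(u) - λ) x` into
`-½ ∑ᵢⱼ A(u)ᵢⱼ uᵢ uⱼ (yᵢ - yⱼ)² ≥ 0`. Hence `J(u, λ) = 2β diag(u²) + (A(u) - λ)` is positive
definite, and the implicit function theorem for `(λ, v) ↦ A(v) v - λ v` yields a differentiable
branch of solutions through `(λ, u(λ))`. The branch stays positive near `λ`, so uniqueness of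
positive solutions identifies it with `u`.
-/

open Matrix Filter Topology

section ZMatrix

variable {ι : Type*} [Fintype ι]

theorem two_mul_sum_sum_mul_mul_sub_sq {c : ι → ι → ℝ} (hc : ∀ i j, c i j = c j i)
    (y : ι → ℝ) :
    2 * ∑ i, ∑ j, c i j * (y i * y j - y i ^ 2) = -∑ i, ∑ j, c i j * (y i - y j) ^ 2 := by
  have hswap : ∑ i, ∑ j, c i j * (y i * y j - y i ^ 2) =
      ∑ i, ∑ j, c i j * (y i * y j - y j ^ 2) := by
    rw [Finset.sum_comm]
    simp only [hc _ _, mul_comm (y _) (y _)]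
  rw [two_mul]
  nth_rw 2 [hswap]
  simp only [← Finset.sum_add_distrib, ← Finset.sum_neg_distrib]
  congr! 2 with i _ j _
  ring

theorem posSemidef_sub_smul_one_of_pos_eigenvector [DecidableEq ι] {M : Matrix ι ι ℝ}
    (hM : M.IsSymm) (hoff : ∀ i j, i ≠ j → M i j ≤ 0) {u : ι → ℝ} (hu : ∀ i, 0 < u i)
    {lam : ℝ} (heig : M *ᵥ u = lam • u) : (M - lam • 1).PosSemidef := by
  refine .of_dotProduct_mulVec_nonneg (isHermitian_iff_isSymm.2 (hM.sub (isSymm_one.smul lam)))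
    fun x => ?_
  set y : ι → ℝ := fun i => x i / u i
  set c : ι → ι → ℝ := fun i j => M i j * u i * u j
  have hx : ∀ i, x i = u i * y i := fun i => (mul_div_cancel₀ (x i) (hu i).ne').symm
  have hrow : ∀ i, ∑ j, M i j * u j = lam * u i := fun i => by
    simpa [mulVec, dotProduct] using congrFun heig i
  have hquad : star x ⬝ᵥ ((M - lam • 1) *ᵥ x) = ∑ i, ∑ j, c i j * (y i * y j - y i ^ 2) :=
    calc star x ⬝ᵥ ((M - lam • 1) *ᵥ x)
        = ∑ i, (∑ j, M i j * u i * u j * (y i * y j) - u i * y i ^ 2 * (lam * u i)) := by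
          rw [sub_mulVec, smul_mulVec, one_mulVec, dotProduct_sub, dotProduct_smul, star_trivial]
          simp only [dotProduct, mulVec, smul_eq_mul, Finset.mul_sum, ← Finset.sum_sub_distrib, hx]
          refine Finset.sum_congr rfl fun i _ => ?_
          congr 1
          · exact Finset.sum_congr rfl fun j _ => by ring
          · ring
      _ = ∑ i, ∑ j, c i j * (y i * y j - y i ^ 2) := by
          simp only [← hrow, Finset.mul_sum, ← Finset.sum_sub_distrib]
          congr! 2 with i _ j
          ring
  have hterm : ∀ i j, c i j * (y i - y j) ^ 2 ≤ 0 := by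
    intro i j
    rcases eq_or_ne i j with rfl | hij
    · simp
    · have hc : c i j ≤ 0 := by
        simpa [c, mul_assoc] using
          mul_nonpos_of_nonpos_of_nonneg (hoff i j hij) (mul_pos (hu i) (hu j)).le
      exact mul_nonpos_of_nonpos_of_nonneg hc (sq_nonneg _)
  have hsum := two_mul_sum_sum_mul_mul_sub_sq (c := c)
    (fun i j => by simp only [c, hM.apply i j]; ring) y
  have hnonpos : ∑ i, ∑ j, c i j * (y i - y j) ^ 2 ≤ 0 :=
    Finset.sum_nonpos fun i _ => Finset.sum_nonpos fun j _ => hterm i j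
  rw [hquad]
  linarith

end ZMatrix

section MatrixInverse

variable {𝕜 : Type*} [NontriviallyNormedField 𝕜] [CompleteSpace 𝕜] {ι : Type*} [Fintype ι]
  [DecidableEq ι] {A : Matrix ι ι 𝕜}

theorem Matrix.toLin'_comp_toLin'_nonsing_inv (hA : IsUnit A) :
    (toLin' A).toContinuousLinearMap ∘L (toLin' A⁻¹).toContinuousLinearMap = .id 𝕜 (ι → 𝕜) := by
  ext v : 1
  simp [mulVec_mulVec, mul_nonsing_inv _ ((isUnit_iff_isUnit_det A).mp hA)]

theorem Matrix.toLin'_nonsing_inv_comp_toLin' (hA : IsUnit A) :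
    (toLin' A⁻¹).toContinuousLinearMap ∘L (toLin' A).toContinuousLinearMap = .id 𝕜 (ι → 𝕜) := by
  ext v : 1
  simp [mulVec_mulVec, nonsing_inv_mul _ ((isUnit_iff_isUnit_det A).mp hA)]

theorem Matrix.isInvertible_toLin' (hA : IsUnit A) :
    (toLin' A).toContinuousLinearMap.IsInvertible :=
  .of_inverse (toLin'_comp_toLin'_nonsing_inv hA) (toLin'_nonsing_inv_comp_toLin' hA)

theorem Matrix.inverse_toLin' (hA : IsUnit A) :
    (toLin' A).toContinuousLinearMap.inverse = (toLin' A⁻¹).toContinuousLinearMap :=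
  ContinuousLinearMap.inverse_eq (toLin'_comp_toLin'_nonsing_inv hA)
    (toLin'_nonsing_inv_comp_toLin' hA)

end MatrixInverse

theorem HasStrictFDerivAt.hasDerivAt_of_eventually_unique {𝕜 : Type*}
    [NontriviallyNormedField 𝕜] [CompleteSpace 𝕜]
    {E F : Type*} [NormedAddCommGroup E] [NormedSpace 𝕜 E] [CompleteSpace E]
    [NormedAddCommGroup F] [NormedSpace 𝕜 F] [CompleteSpace F]
    {f : 𝕜 × E → F} {f' : 𝕜 × E →L[𝕜] F} {p : 𝕜 × E} (hf : HasStrictFDerivAt f f' p)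
    (hf' : (f' ∘L .inr 𝕜 𝕜 E).IsInvertible) {g : 𝕜 → E} {S : Set E} (hS : S ∈ 𝓝 p.2)
    (hg : ∀ᶠ t in 𝓝 p.1, ∀ x ∈ S, f (t, x) = f p → x = g t) :
    HasDerivAt g (-(f' ∘L .inr 𝕜 𝕜 E).inverse (f' (1, 0))) p.1 := by
  have hψg : hf.implicitFunctionOfProdDomain hf' =ᶠ[𝓝 p.1] g := by
    filter_upwards [hg, hf.tendsto_implicitFunctionOfProdDomain hf' hS,
      hf.eventually_apply_implicitFunctionOfProdDomain hf'] with t ht hψS hψf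
    exact ht _ hψS hψf
  exact (hf.hasStrictFDerivAt_implicitFunctionOfProdDomain hf').hasFDerivAt.hasDerivAt
    |>.congr_of_eventuallyEq hψg.symm

theorem IsNsMMat.apply_nonpos {n : ℕ} {B : Matrix (Fin n) (Fin n) ℝ} (hB : IsNsMMat B)
    {i j : Fin n} (hij : i ≠ j) : B i j ≤ 0 := by
  obtain ⟨s, A, hA, -, rfl⟩ := hB
  simpa [one_apply_ne hij] using hA i j

section Equation

variable {n : ℕ} (β : ℝ) (B : Matrix (Fin n) (Fin n) ℝ)

theorem AU_mulVec_self (v : Fin n → ℝ) : AU β B v *ᵥ v = β • v ^ 3 + B *ᵥ v := by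
  ext i
  simp only [AU, add_mulVec, smul_mulVec, mulVec_diagonal, Pi.add_apply, Pi.smul_apply,
    Pi.pow_apply, smul_eq_mul]
  ring

theorem JU_eq_smul_diagonal_add (lam : ℝ) (u : Fin n → ℝ) :
    JU β lam B u = (2 * β) • diagonal (u ^ 2) + (AU β B u - lam • 1) := by
  simp only [JU, AU]
  module

theorem isSymm_AU (hB : B.IsSymm) (u : Fin n → ℝ) : (AU β B u).IsSymm :=
  ((isSymm_diagonal _).smul β).add hB

theorem posDef_JU (hB : B.IsSymm) (hoff : ∀ i j, i ≠ j → B i j ≤ 0) (hβ : 0 < β)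
    {u : Fin n → ℝ} (hu : ∀ i, 0 < u i) {lam : ℝ} (heq : AU β B u *ᵥ u = lam • u) :
    (JU β lam B u).PosDef := by
  rw [JU_eq_smul_diagonal_add]
  refine .add_posSemidef ?_ (posSemidef_sub_smul_one_of_pos_eigenvector (isSymm_AU β B hB u)
    (fun i j hij => ?_) hu heq)
  · rw [← diagonal_smul]
    exact .diagonal fun i => mul_pos (by positivity) (pow_pos (hu i) 2)
  · simpa [AU, diagonal_apply_ne _ hij] using hoff i j hij

noncomputable def eigenResidual (p : ℝ × (Fin n → ℝ)) : Fin n → ℝ :=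
  AU β B p.2 *ᵥ p.2 - p.1 • p.2

noncomputable def eigenResidualDeriv (lam : ℝ) (u : Fin n → ℝ) :
    ℝ × (Fin n → ℝ) →L[ℝ] Fin n → ℝ :=
  (toLin' (JU β lam B u)).toContinuousLinearMap ∘L .snd ℝ ℝ (Fin n → ℝ) -
    (ContinuousLinearMap.fst ℝ ℝ (Fin n → ℝ)).smulRight u

theorem eigenResidualDeriv_comp_inr (lam : ℝ) (u : Fin n → ℝ) :
    eigenResidualDeriv β B lam u ∘L .inr ℝ ℝ (Fin n → ℝ) =
      (toLin' (JU β lam B u)).toContinuousLinearMap := by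
  ext
  simp [eigenResidualDeriv]

theorem eigenResidualDeriv_apply_one_zero (lam : ℝ) (u : Fin n → ℝ) :
    eigenResidualDeriv β B lam u (1, 0) = -u := by
  simp [eigenResidualDeriv]

theorem hasStrictFDerivAt_eigenResidual (lam : ℝ) (u : Fin n → ℝ) :
    HasStrictFDerivAt (eigenResidual β B) (eigenResidualDeriv β B lam u) (lam, u) := by
  have hcube := ((hasStrictFDerivAt_snd (𝕜 := ℝ) (p := (lam, u))).pow 3).const_smul β
  have hlin := (toLin' B).toContinuousLinearMap.hasStrictFDerivAt.comp (lam, u)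
    (hasStrictFDerivAt_snd (𝕜 := ℝ) (p := (lam, u)))
  have hscal := (hasStrictFDerivAt_fst (𝕜 := ℝ) (p := (lam, u))).smul hasStrictFDerivAt_snd
  have hres : eigenResidual β B = fun p => β • p.2 ^ 3 + B *ᵥ p.2 - p.1 • p.2 := by
    ext p : 1
    simp only [eigenResidual, AU_mulVec_self]
  rw [hres]
  refine ((hcube.add hlin).sub hscal).congr_fderiv ?_
  ext <;> simp [eigenResidualDeriv, JU, mulVec_diagonal]
  ring

end Equation

theorem stmt5_general {n : ℕ} (B : Matrix (Fin n) (Fin n) ℝ) (β : ℝ)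
    (hB1 : B.IsSymm) (hB3 : IsNsMMat B) (hβ : 0 < β)
    (u : ℝ → Fin n → ℝ)
    (hsol : ∀ lam, smallestEig B < lam →
      (∀ i, 0 < u lam i) ∧ (AU β B (u lam)).mulVec (u lam) = lam • u lam)
    (huniq : ∀ lam, smallestEig B < lam → ∀ v : Fin n → ℝ,
      (∀ i, 0 < v i) → (AU β B v).mulVec v = lam • v → v = u lam) :
    ContinuousOn u (Set.Ioi (smallestEig B)) ∧
    ∀ lam, smallestEig B < lam →
      HasDerivAt u ((JU β lam B (u lam))⁻¹.mulVec (u lam)) lam := by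
  have hderiv : ∀ lam, smallestEig B < lam →
      HasDerivAt u ((JU β lam B (u lam))⁻¹.mulVec (u lam)) lam := by
    intro lam hlam
    obtain ⟨hpos, hsolves⟩ := hsol lam hlam
    have hJ : IsUnit (JU β lam B (u lam)) :=
      (posDef_JU β B hB1 (fun _ _ => hB3.apply_nonpos) hβ hpos hsolves).isUnit
    have hS : {v : Fin n → ℝ | ∀ i, 0 < v i} ∈ 𝓝 (u lam) := eventually_all.2 fun i =>
      ((continuous_apply i).tendsto (u lam)).eventually_const_lt (hpos i)
    have hunique : ∀ᶠ t in 𝓝 lam, ∀ v ∈ {v : Fin n → ℝ | ∀ i, 0 < v i},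
        eigenResidual β B (t, v) = eigenResidual β B (lam, u lam) → v = u t := by
      filter_upwards [eventually_gt_nhds hlam] with t ht v hv hres
      simp only [eigenResidual, hsolves, sub_self, sub_eq_zero] at hres
      exact huniq t ht v hv hres
    have hinv := isInvertible_toLin' hJ
    rw [← eigenResidualDeriv_comp_inr] at hinv
    refine ((hasStrictFDerivAt_eigenResidual β B lam (u lam)).hasDerivAt_of_eventually_unique
      hinv hS hunique).congr_deriv ?_
    rw [eigenResidualDeriv_comp_inr, inverse_toLin' hJ, eigenResidualDeriv_apply_one_zero]
    simp [mulVec_neg]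
  exact ⟨fun lam hlam => (hderiv lam hlam).continuousAt.continuousWithinAt, hderiv⟩

theorem stmt5 {n : ℕ} [NeZero n] (B : Matrix (Fin n) (Fin n) ℝ) (β : ℝ)
    (hB1 : B.IsSymm) (hB2 : MatIrred B) (hB3 : IsNsMMat B) (hβ : 0 < β)
    (u : ℝ → Fin n → ℝ)
    (hsol : ∀ lam, smallestEig B < lam →
      (∀ i, 0 < u lam i) ∧ (AU β B (u lam)).mulVec (u lam) = lam • u lam)
    (huniq : ∀ lam, smallestEig B < lam → ∀ v : Fin n → ℝ,
      (∀ i, 0 < v i) → (AU β B v).mulVec v = lam • v → v = u lam) :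
    ContinuousOn u (Set.Ioi (smallestEig B)) ∧
    ∀ lam, smallestEig B < lam →
      HasDerivAt u ((JU β lam B (u lam))⁻¹.mulVec (u lam)) lam :=
  stmt5_general B β hB1 hB3 hβ u hsol huniq
end

section
/- Let B be a symmetric irreducible nonsingular M-matrix, β > 0, and suppose (u*, λ*) is a positive solution of β·diag(u^[2])u + Bu = λu with ‖u*‖₂ = 1, with λ_min(B) < a < λ* < b. Let u(λ) be the unique positive solution of the unconstrained problem for each λ ∈ (λ_min(B), ∞) and let u₀ > u(b) be an initial upper bound. If λ_k is the midpoint produced at step k of bisection on [a, b] (so |λ_k − λ*| ≤ (b−a)/2^k) and u_k = u(λ_k), then ‖u_k − u*‖₂ ≤ M(b−a)/2^k, where M = ‖u₀‖₂ / (2β·min(u(a)^[2])). -/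
open Matrix Filter Topology

/-! For a positive solution `x` at `λ`, the matrix `A(x) - λI` is a symmetric Z-matrix with the
positive vector `x` in its kernel, hence positive semidefinite. Subtracting the equations at
`x = u(λ)` and `y = u(μ)` and factoring `x³ - y³` gives
`(A(x) - λI + β diag(y ∘ (x + y))) (x - y) = (λ - μ) y`.
Once `u(a) ≤ x, y`, the diagonal part is at least `2β min u(a)^[2]`, which yields the Lipschitz
bound; the same identity with `x, y` swapped, tested against the negative part of `y - x`, gives
the monotonicity `u(λ) ≤ u(μ)` for `λ ≤ μ` that provides those lower bounds and `‖u*‖ ≤ ‖u₀‖`. -/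

namespace Matrix

variable {ι : Type*} [Fintype ι]

/-- With `z = x / v` and `Tᵢⱼ = Sᵢⱼ vᵢ vⱼ`, symmetry of `S` gives
`xᵀ S x = ∑ᵢ (S v)ᵢ vᵢ zᵢ² + ½ ∑ᵢⱼ (-Tᵢⱼ) (zᵢ - zⱼ)²`, a sum of nonnegative terms. -/
theorem IsSymm.dotProduct_mulVec_self_nonneg {S : Matrix ι ι ℝ} (hS : S.IsSymm)
    (hoff : ∀ i j, i ≠ j → S i j ≤ 0) {v : ι → ℝ} (hv : ∀ i, 0 < v i) (hSv : 0 ≤ S *ᵥ v)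
    (x : ι → ℝ) : 0 ≤ x ⬝ᵥ S *ᵥ x := by
  set z : ι → ℝ := fun i => x i / v i
  set T : ι → ι → ℝ := fun i j => S i j * v i * v j with hT
  have hx : ∀ i, x i = v i * z i := fun i => (mul_div_cancel₀ _ (hv i).ne').symm
  have hdiag : ∑ i, ∑ j, T i j * z i ^ 2 = ∑ i, (S *ᵥ v) i * v i * z i ^ 2 := by
    refine Finset.sum_congr rfl fun i _ => ?_
    simp only [hT, mulVec, dotProduct, Finset.sum_mul]
    exact Finset.sum_congr rfl fun j _ => by ring
  have hswap : ∑ i, ∑ j, T i j * z j ^ 2 = ∑ i, ∑ j, T i j * z i ^ 2 := by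
    rw [Finset.sum_comm]
    exact Finset.sum_congr rfl fun i _ => Finset.sum_congr rfl fun j _ => by
      simp only [hT, hS.apply j i]; ring
  have hquad : x ⬝ᵥ S *ᵥ x = ∑ i, ∑ j, T i j * (z i * z j) := by
    simp only [hT, dotProduct, mulVec, Finset.mul_sum]
    exact Finset.sum_congr rfl fun i _ => Finset.sum_congr rfl fun j _ => by
      rw [hx i, hx j]; ring
  have hexpand : ∑ i, ∑ j, -T i j * (z i - z j) ^ 2 = 2 * ∑ i, ∑ j, T i j * (z i * z j)
      - ∑ i, ∑ j, T i j * z i ^ 2 - ∑ i, ∑ j, T i j * z j ^ 2 := by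
    rw [Finset.mul_sum, ← Finset.sum_sub_distrib, ← Finset.sum_sub_distrib]
    refine Finset.sum_congr rfl fun i _ => ?_
    rw [Finset.mul_sum, ← Finset.sum_sub_distrib, ← Finset.sum_sub_distrib]
    exact Finset.sum_congr rfl fun j _ => by ring
  have hdiag_nonneg : 0 ≤ ∑ i, (S *ᵥ v) i * v i * z i ^ 2 := Finset.sum_nonneg fun i _ =>
    mul_nonneg (mul_nonneg (hSv i) (hv i).le) (sq_nonneg _)
  have hoff_nonneg : 0 ≤ ∑ i, ∑ j, -T i j * (z i - z j) ^ 2 :=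
    Finset.sum_nonneg fun i _ => Finset.sum_nonneg fun j _ => by
      rcases eq_or_ne i j with rfl | hij
      · simp
      · have hTij : 0 ≤ -T i j := by
          simpa [hT, neg_mul] using mul_nonneg (mul_nonneg (neg_nonneg.2 (hoff i j hij))
            (hv i).le) (hv j).le
        exact mul_nonneg hTij (sq_nonneg _)
  linarith

theorem dotProduct_negPart_mulVec_negPart_nonpos {K : Matrix ι ι ℝ}
    (hoff : ∀ i j, i ≠ j → K i j ≤ 0) {d : ι → ℝ} (hKd : 0 ≤ K *ᵥ d) :
    d⁻ ⬝ᵥ K *ᵥ d⁻ ≤ 0 := by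
  have hcross : d⁻ ⬝ᵥ K *ᵥ d⁺ ≤ 0 := by
    simp only [dotProduct, mulVec, Finset.mul_sum]
    refine Finset.sum_nonpos fun i _ => Finset.sum_nonpos fun j _ => ?_
    rcases eq_or_ne i j with rfl | hij
    · rcases le_total 0 (d i) with h | h
      · simp [Pi.negPart_apply, negPart_eq_zero.2 h]
      · simp [Pi.posPart_apply, posPart_eq_zero.2 h]
    · exact mul_nonpos_of_nonneg_of_nonpos (negPart_nonneg _)
        (mul_nonpos_of_nonpos_of_nonneg (hoff i j hij) (posPart_nonneg _))
  have hpair : 0 ≤ d⁻ ⬝ᵥ K *ᵥ d := Finset.sum_nonneg fun i _ =>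
    mul_nonneg (negPart_nonneg _) (hKd i)
  have hsplit : d⁻ ⬝ᵥ K *ᵥ d = d⁻ ⬝ᵥ K *ᵥ d⁺ - d⁻ ⬝ᵥ K *ᵥ d⁻ := by
    rw [← dotProduct_sub, ← mulVec_sub, posPart_sub_negPart]
  linarith

theorem nonneg_of_mulVec_add_diagonal_nonneg [DecidableEq ι] {S : Matrix ι ι ℝ}
    (hS : ∀ z, 0 ≤ z ⬝ᵥ S *ᵥ z) (hoff : ∀ i j, i ≠ j → S i j ≤ 0) {e : ι → ℝ}
    (he : ∀ i, 0 < e i) {d : ι → ℝ} (hd : 0 ≤ (S + diagonal e) *ᵥ d) : 0 ≤ d := by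
  have hoff' : ∀ i j, i ≠ j → (S + diagonal e) i j ≤ 0 := fun i j hij => by
    simpa [diagonal_apply_ne _ hij] using hoff i j hij
  have hneg := dotProduct_negPart_mulVec_negPart_nonpos hoff' hd
  have hterm : ∀ i ∈ Finset.univ, 0 ≤ d⁻ i * (e i * d⁻ i) := fun i _ =>
    mul_nonneg (negPart_nonneg _) (mul_nonneg (he i).le (negPart_nonneg _))
  rw [add_mulVec, dotProduct_add] at hneg
  have hdiag : d⁻ ⬝ᵥ diagonal e *ᵥ d⁻ = ∑ i, d⁻ i * (e i * d⁻ i) := by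
    simp only [dotProduct, mulVec_diagonal]
  have hsum : ∑ i, d⁻ i * (e i * d⁻ i) = 0 :=
    le_antisymm (by linarith [hS d⁻]) (Finset.sum_nonneg hterm)
  intro i
  have hi := (Finset.sum_eq_zero_iff_of_nonneg hterm).1 hsum i (Finset.mem_univ i)
  exact negPart_eq_zero.1 (by simpa [(he i).ne', Pi.negPart_apply] using hi)

end Matrix

section VecNorm

variable {n : ℕ}

theorem vecNorm_nonneg (u : Fin n → ℝ) : 0 ≤ vecNorm u := Real.sqrt_nonneg _

theorem sq_vecNorm (u : Fin n → ℝ) : vecNorm u ^ 2 = u ⬝ᵥ u := by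
  rw [vecNorm, Real.sq_sqrt (Finset.sum_nonneg fun i _ => sq_nonneg _)]
  simp only [dotProduct, sq]

theorem vecNorm_smul (c : ℝ) (u : Fin n → ℝ) : vecNorm (c • u) = |c| * vecNorm u := by
  simp only [vecNorm, Pi.smul_apply, smul_eq_mul, mul_pow, ← Finset.mul_sum]
  rw [Real.sqrt_mul (sq_nonneg c), Real.sqrt_sq_eq_abs]

theorem dotProduct_le_vecNorm_mul_vecNorm (u v : Fin n → ℝ) :
    u ⬝ᵥ v ≤ vecNorm u * vecNorm v :=
  Real.sum_mul_le_sqrt_mul_sqrt _ u v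

theorem vecNorm_le_vecNorm {u v : Fin n → ℝ} (hu : 0 ≤ u) (huv : u ≤ v) :
    vecNorm u ≤ vecNorm v :=
  Real.sqrt_le_sqrt <| Finset.sum_le_sum fun i _ => pow_le_pow_left₀ (hu i) (huv i) 2

theorem mul_vecNorm_le_vecNorm_mulVec_add_diagonal {S : Matrix (Fin n) (Fin n) ℝ}
    (hS : ∀ z, 0 ≤ z ⬝ᵥ S *ᵥ z) {e : Fin n → ℝ} {m : ℝ} (hm : ∀ i, m ≤ e i)
    (w : Fin n → ℝ) : m * vecNorm w ≤ vecNorm ((S + diagonal e) *ᵥ w) := by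
  have hdiag : m * vecNorm w ^ 2 ≤ w ⬝ᵥ diagonal e *ᵥ w := by
    rw [sq_vecNorm]
    simp only [dotProduct, mulVec_diagonal, Finset.mul_sum]
    exact Finset.sum_le_sum fun i _ => by nlinarith [hm i, mul_self_nonneg (w i)]
  have hcoer : m * vecNorm w ^ 2 ≤ vecNorm w * vecNorm ((S + diagonal e) *ᵥ w) := by
    calc m * vecNorm w ^ 2 ≤ w ⬝ᵥ (S + diagonal e) *ᵥ w := by
          rw [add_mulVec, dotProduct_add]; linarith [hS w]
      _ ≤ _ := dotProduct_le_vecNorm_mul_vecNorm _ _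
  rcases (vecNorm_nonneg w).eq_or_lt with hw | hw
  · rw [← hw, mul_zero]; exact vecNorm_nonneg _
  · nlinarith

end VecNorm

section Solutions

variable {n : ℕ} {β : ℝ} {B : Matrix (Fin n) (Fin n) ℝ}

theorem AU_sub_smul_one_apply_of_ne (x : Fin n → ℝ) (lam : ℝ) {i j : Fin n} (hij : i ≠ j) :
    (AU β B x - lam • 1) i j = B i j := by
  simp [AU, diagonal_apply_ne _ hij, one_apply_ne hij]

theorem isSymm_AU_sub_smul_one (hB : B.IsSymm) (x : Fin n → ℝ) (lam : ℝ) :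
    (AU β B x - lam • 1).IsSymm :=
  (((isSymm_diagonal _).smul β).add hB).sub (isSymm_one.smul lam)

theorem dotProduct_AU_sub_smul_one_mulVec_nonneg (hB : B.IsSymm)
    (hoff : ∀ i j, i ≠ j → B i j ≤ 0) {x : Fin n → ℝ} {lam : ℝ} (hx : ∀ i, 0 < x i)
    (hxeq : AU β B x *ᵥ x = lam • x) (z : Fin n → ℝ) :
    0 ≤ z ⬝ᵥ (AU β B x - lam • 1) *ᵥ z := by
  refine (isSymm_AU_sub_smul_one hB x lam).dotProduct_mulVec_self_nonneg
    (fun i j hij => ?_) hx ?_ z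
  · rw [AU_sub_smul_one_apply_of_ne x lam hij]; exact hoff i j hij
  · rw [sub_mulVec, hxeq, smul_mulVec, one_mulVec, sub_self]

theorem AU_sub_smul_one_add_diagonal_mulVec_sub {x y : Fin n → ℝ} {lam mu : ℝ}
    (hxeq : AU β B x *ᵥ x = lam • x) (hyeq : AU β B y *ᵥ y = mu • y) :
    (AU β B x - lam • 1 + diagonal fun i => β * (y i * (x i + y i))) *ᵥ (x - y)
      = (lam - mu) • y := by
  ext i
  have hx := congrFun hxeq i
  have hy := congrFun hyeq i
  simp only [AU, add_mulVec, sub_mulVec, mulVec_sub, smul_mulVec, one_mulVec,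
    mulVec_diagonal, Pi.add_apply, Pi.sub_apply, Pi.smul_apply, smul_eq_mul] at hx hy ⊢
  linear_combination hx - hy

variable (hβ : 0 < β) (hB : B.IsSymm) (hoff : ∀ i j, i ≠ j → B i j ≤ 0)
include hβ hB hoff

theorem le_of_AU_mulVec_eq {x y : Fin n → ℝ} {lam mu : ℝ} (hx : ∀ i, 0 < x i)
    (hy : ∀ i, 0 < y i) (hxeq : AU β B x *ᵥ x = lam • x) (hyeq : AU β B y *ᵥ y = mu • y)
    (hle : lam ≤ mu) : x ≤ y := by
  have hd := AU_sub_smul_one_add_diagonal_mulVec_sub hyeq hxeq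
  refine sub_nonneg.1 (nonneg_of_mulVec_add_diagonal_nonneg
    (e := fun i => β * (x i * (y i + x i)))
    (dotProduct_AU_sub_smul_one_mulVec_nonneg hB hoff hy hyeq) (fun i j hij => ?_) (fun i => ?_) ?_)
  · rw [AU_sub_smul_one_apply_of_ne y mu hij]; exact hoff i j hij
  · have := hx i; have := hy i; positivity
  · rw [hd]; exact smul_nonneg (sub_nonneg.2 hle) fun i => (hx i).le

theorem mul_vecNorm_sub_le_of_AU_mulVec_eq {x y : Fin n → ℝ} {lam mu c : ℝ}
    (hx : ∀ i, 0 < x i) (hxeq : AU β B x *ᵥ x = lam • x) (hyeq : AU β B y *ᵥ y = mu • y)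
    (hc : ∀ i, 2 * c ≤ y i * (x i + y i)) :
    2 * β * c * vecNorm (x - y) ≤ |lam - mu| * vecNorm y := by
  have h := mul_vecNorm_le_vecNorm_mulVec_add_diagonal
    (dotProduct_AU_sub_smul_one_mulVec_nonneg hB hoff hx hxeq)
    (fun i => by nlinarith [hc i] : ∀ i, 2 * β * c ≤ β * (y i * (x i + y i))) (x - y)
  rwa [AU_sub_smul_one_add_diagonal_mulVec_sub hxeq hyeq, vecNorm_smul] at h

end Solutions

theorem stmt8_general {n : ℕ} [NeZero n] (B : Matrix (Fin n) (Fin n) ℝ) (β : ℝ)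
    (hB1 : B.IsSymm) (hB3 : IsNsMMat B) (hβ : 0 < β)
    (ustar : Fin n → ℝ) (lamstar a b : ℝ)
    (hstar : ∀ i, 0 < ustar i)
    (hstareq : (AU β B ustar).mulVec ustar = lamstar • ustar)
    (ha1 : smallestEig B < a) (ha2 : a < lamstar) (hb : lamstar < b)
    (u : ℝ → Fin n → ℝ)
    (hsol : ∀ lam, smallestEig B < lam →
      (∀ i, 0 < u lam i) ∧ (AU β B (u lam)).mulVec (u lam) = lam • u lam)
    (huniq : ∀ lam, smallestEig B < lam → ∀ v : Fin n → ℝ,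
      (∀ i, 0 < v i) → (AU β B v).mulVec v = lam • v → v = u lam)
    (u₀ : Fin n → ℝ) (hu₀ : ∀ i, u b i < u₀ i)
    (lamk : ℕ → ℝ) (hlk : ∀ k, a ≤ lamk k ∧ lamk k ≤ b)
    (hbis : ∀ k, |lamk k - lamstar| ≤ (b - a) / 2 ^ k) :
    ∀ k, vecNorm (u (lamk k) - ustar) ≤
      (vecNorm u₀ / (2 * β * (⨅ i, (u a i) ^ 2))) * (b - a) / 2 ^ k := by
  intro k
  have hoff : ∀ i j, i ≠ j → B i j ≤ 0 := fun i j => hB3.apply_nonpos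
  have hmono : ∀ lam mu, a ≤ lam → lam ≤ mu → u lam ≤ u mu := fun lam mu hlam hle =>
    le_of_AU_mulVec_eq hβ hB1 hoff (hsol lam (by linarith)).1 (hsol mu (by linarith)).1
      (hsol lam (by linarith)).2 (hsol mu (by linarith)).2 hle
  have hustar : ustar = u lamstar := huniq lamstar (by linarith) ustar hstar hstareq
  set c := ⨅ i, u a i ^ 2
  have hc : 0 < c := by
    obtain ⟨i, hi⟩ := exists_eq_ciInf_of_finite (f := fun i => u a i ^ 2)
    rw [show c = u a i ^ 2 from hi.symm]
    exact pow_pos ((hsol a ha1).1 i) 2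
  have hcx : ∀ i, 2 * c ≤ ustar i * (u (lamk k) i + ustar i) := fun i => by
    have hci : c ≤ u a i ^ 2 := ciInf_le (Finite.bddBelow_range _) i
    have hxi := hmono a (lamk k) le_rfl (hlk k).1 i
    have hyi := hustar ▸ hmono a lamstar le_rfl ha2.le i
    nlinarith [(hsol a ha1).1 i]
  have hnorm : vecNorm ustar ≤ vecNorm u₀ := vecNorm_le_vecNorm (fun i => (hstar i).le)
    fun i => (hustar ▸ hmono lamstar b ha2.le hb.le i).trans (hu₀ i).le
  obtain ⟨hxpos, hxeq⟩ := hsol (lamk k) (by linarith [hlk k])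
  have hest := mul_vecNorm_sub_le_of_AU_mulVec_eq hβ hB1 hoff hxpos hxeq hstareq hcx
  calc vecNorm (u (lamk k) - ustar)
      = 2 * β * c * vecNorm (u (lamk k) - ustar) / (2 * β * c) := by field_simp
    _ ≤ (b - a) / 2 ^ k * vecNorm u₀ / (2 * β * c) := by
        gcongr ?_ / _
        exact hest.trans (mul_le_mul (hbis k) hnorm (vecNorm_nonneg _)
          ((abs_nonneg _).trans (hbis k)))
    _ = _ := by ring

theorem stmt8 {n : ℕ} [NeZero n] (B : Matrix (Fin n) (Fin n) ℝ) (β : ℝ)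
    (hB1 : B.IsSymm) (hB2 : MatIrred B) (hB3 : IsNsMMat B) (hβ : 0 < β)
    (ustar : Fin n → ℝ) (lamstar a b : ℝ)
    (hstar : ∀ i, 0 < ustar i) (hstarn : vecNorm ustar = 1)
    (hstareq : (AU β B ustar).mulVec ustar = lamstar • ustar)
    (ha1 : smallestEig B < a) (ha2 : a < lamstar) (hb : lamstar < b)
    (u : ℝ → Fin n → ℝ)
    (hsol : ∀ lam, smallestEig B < lam →
      (∀ i, 0 < u lam i) ∧ (AU β B (u lam)).mulVec (u lam) = lam • u lam)
    (huniq : ∀ lam, smallestEig B < lam → ∀ v : Fin n → ℝ,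
      (∀ i, 0 < v i) → (AU β B v).mulVec v = lam • v → v = u lam)
    (u₀ : Fin n → ℝ) (hu₀ : ∀ i, u b i < u₀ i)
    (lamk : ℕ → ℝ) (hlk : ∀ k, a ≤ lamk k ∧ lamk k ≤ b)
    (hbis : ∀ k, |lamk k - lamstar| ≤ (b - a) / 2 ^ k) :
    ∀ k, vecNorm (u (lamk k) - ustar) ≤
      (vecNorm u₀ / (2 * β * (⨅ i, (u a i) ^ 2))) * (b - a) / 2 ^ k :=
  stmt8_general B β hB1 hB3 hβ ustar lamstar a b hstar hstareq ha1 ha2 hb u hsol huniq u₀ hu₀ lamk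
    hlk hbis
end
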